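/- If 𝒰 ∈ 𝒫(𝒬) and 𝒱 ⊆ 𝓒 is closed, then 𝒰·𝒱 := {(A·C, D) | A ∈ 𝒰, (C,D) ∈ 𝒱} is again closed. -/

import Mathlib

variable {Q : Type*} {A : Type*}

/-- Reachability in a nondeterministic automaton: `q` is reachable from `p` reading `w`. -/
def Reach (δ : Q → A → Set Q) : Q → List A → Q → Prop
  | p, [], q => p = q
  | p, a :: w, q => ∃ r ∈ δ p a, Reach δ r w q

/-- Reachability visiting some final state along the way (possibly the endpoints). -/
def ReachF (δ : Q → A → Set Q) (Fs : Set Q) (p : Q) (w : List A) (q : Q) : Prop :=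
  ∃ u v r, w = u ++ v ∧ r ∈ Fs ∧ Reach δ p u r ∧ Reach δ r v q

/-- The relation ∼ : `w ∼ u` iff for all states `p q`, reachability and
reachability-through-final-states via `w` and via `u` coincide. -/
def Sim (δ : Q → A → Set Q) (Fs : Set Q) (w u : List A) : Prop :=
  ∀ p q : Q, (Reach δ p w q ↔ Reach δ p u q) ∧ (ReachF δ Fs p w q ↔ ReachF δ Fs p u q)

/-- The class of a word in 𝒬 = Σ⁺/∼ ⊎ {[ε]} : for a nonempty word its ∼-class,
and `[ε] = {ε}` for the empty word. -/
def wordClass (δ : Q → A → Set Q) (Fs : Set Q) (w : List A) : Set (List A) :=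
  {u | (w = [] ∧ u = []) ∨ (w ≠ [] ∧ u ≠ [] ∧ Sim δ Fs w u)}

/-- `C` is an element of 𝒬. -/
def IsClass (δ : Q → A → Set Q) (Fs : Set Q) (C : Set (List A)) : Prop :=
  ∃ w : List A, C = wordClass δ Fs w

/-- Elementwise concatenation of languages of finite words. -/
def mulSet (L M : Set (List A)) : Set (List A) := Set.image2 (· ++ ·) L M

/-- Monoid multiplication of classes: the class of the concatenation of representatives. -/
def classMul (δ : Q → A → Set Q) (Fs : Set Q) (C D : Set (List A)) : Set (List A) :=
  {v | ∃ w ∈ C, ∃ u ∈ D, v ∈ wordClass δ Fs (w ++ u)}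

/-- Finite star of a language. -/
def starSet (L : Set (List A)) : Set (List A) :=
  {w | ∃ l : List (List A), (∀ u ∈ l, u ∈ L) ∧ w = l.flatten}

/-- Possibly infinite words over `A` : Σ^{≤ω}, as stable `Option`-valued streams. -/
def Word (A : Type*) : Type _ := {g : ℕ → Option A // ∀ n, g n = none → g (n + 1) = none}

/-- A finite word as an element of Σ^{≤ω}. -/
def ofList (w : List A) : Word A :=
  ⟨fun n => w[n]?, fun n h => by
    rw [List.getElem?_eq_none_iff] at *
    omega⟩

/-- An infinite word as an element of Σ^{≤ω}. -/
def ofStream (s : ℕ → A) : Word A := ⟨fun n => some (s n), fun n h => by simp at h⟩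

/- The (possibly infinite) concatenation `f 0 · f 1 · f 2 ⋯` of a sequence of finite
words, as an element of Σ^{≤ω}. -/
open Classical in
noncomputable def prodWord (f : ℕ → List A) : Word A :=
  ⟨fun n =>
    if h : ∃ k, n < ((List.range k).flatMap f).length then
      ((List.range h.choose).flatMap f)[n]?
    else none, by
    intro n hn
    dsimp only at hn ⊢
    by_cases h : ∃ k, n < ((List.range k).flatMap f).length
    · exfalso
      rw [dif_pos h, List.getElem?_eq_none_iff] at hn
      have := h.choose_spec
      omega
    · have h2 : ¬ ∃ k, n + 1 < ((List.range k).flatMap f).length := by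
        push_neg at h ⊢
        intro k
        have := h k
        omega
      rw [dif_neg h2]⟩

/-- Concatenation of a finite word with a possibly infinite word. -/
def catWord (u : List A) (w : Word A) : Word A :=
  ⟨fun n => if n < u.length then u[n]? else w.1 (n - u.length), by
    intro n hn
    dsimp only at hn ⊢
    by_cases h : n < u.length
    · exfalso
      rw [if_pos h, List.getElem?_eq_none_iff] at hn
      omega
    · rw [if_neg h] at hn
      have h2 : ¬ n + 1 < u.length := by omega
      rw [if_neg h2]
      have h3 : n + 1 - u.length = (n - u.length) + 1 := by omega
      rw [h3]
      exact w.2 _ hn⟩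

/-- `CD^ω` : all words `w₀w₁w₂⋯` with `w₀ ∈ C` and `wᵢ ∈ D` for `i ≥ 1`. -/
def omegaProd (C D : Set (List A)) : Set (Word A) :=
  {w | ∃ f : ℕ → List A, f 0 ∈ C ∧ (∀ i, 1 ≤ i → f i ∈ D) ∧ w = prodWord f}

/-- `L^ω` : all words `w₁w₂w₃⋯` with all `wᵢ ∈ L`. -/
def omegaPow (L : Set (List A)) : Set (Word A) :=
  {w | ∃ f : ℕ → List A, (∀ i, f i ∈ L) ∧ w = prodWord f}

/-- Acceptance of a finite word (as an NFA). -/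
def NFAAccepts (δ : Q → A → Set Q) (q0 : Q) (Fs : Set Q) (w : List A) : Prop :=
  ∃ q ∈ Fs, Reach δ q0 w q

/-- Büchi acceptance of an infinite word: a run from `q0` visiting `Fs` infinitely often. -/
def BuchiAccepts (δ : Q → A → Set Q) (q0 : Q) (Fs : Set Q) (s : ℕ → A) : Prop :=
  ∃ r : ℕ → Q, r 0 = q0 ∧ (∀ n, r (n + 1) ∈ δ (r n) (s n)) ∧ {n | r n ∈ Fs}.Infinite

/-- The language `L(𝔄) ⊆ Σ^{≤ω}` of the extended Büchi automaton: finite words accepted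
as an NFA together with infinite words accepted as a Büchi automaton. -/
def LangOf (δ : Q → A → Set Q) (q0 : Q) (Fs : Set Q) : Set (Word A) :=
  {w | (∃ l : List A, w = ofList l ∧ NFAAccepts δ q0 Fs l) ∨
       (∃ s : ℕ → A, w = ofStream s ∧ BuchiAccepts δ q0 Fs s)}

/-- The set 𝒬 of classes, as a type. -/
def QClass (δ : Q → A → Set Q) (Fs : Set Q) : Type _ := {C : Set (List A) // IsClass δ Fs C}

/-- The set 𝓒 of pairs `(C, D)` of classes with `CD = C` and `DD = D`, as a type. -/
def CPair (δ : Q → A → Set Q) (Fs : Set Q) : Type _ :=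
  {p : Set (List A) × Set (List A) //
    IsClass δ Fs p.1 ∧ IsClass δ Fs p.2 ∧
    classMul δ Fs p.1 p.2 = p.1 ∧ classMul δ Fs p.2 p.2 = p.2}

/-- The language `CD^ω` denoted by an element of 𝓒. -/
def concPair {δ : Q → A → Set Q} {Fs : Set Q} (p : CPair δ Fs) : Set (Word A) :=
  omegaProd p.1.1 p.1.2

/-- A subset 𝒱 ⊆ 𝓒 is closed: whenever `UV^ω ∩ CD^ω ≠ ∅` for `(C,D) ∈ 𝒱` and
`(U,V) ∈ 𝓒`, then `(U,V) ∈ 𝒱`. -/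
def IsClosedC {δ : Q → A → Set Q} {Fs : Set Q} (𝒱 : Set (CPair δ Fs)) : Prop :=
  ∀ p ∈ 𝒱, ∀ q : CPair δ Fs, (concPair q ∩ concPair p).Nonempty → q ∈ 𝒱

/-- Pre-abstraction 𝔣. -/
def frakF (δ : Q → A → Set Q) (Fs : Set Q) (V : Set (Word A)) : Set (CPair δ Fs) :=
  {p | (concPair p ∩ V).Nonempty}

/-- Pre-concretization 𝔤. -/
def frakG {δ : Q → A → Set Q} {Fs : Set Q} (𝒱 : Set (CPair δ Fs)) : Set (Word A) :=
  ⋃ p ∈ 𝒱, concPair p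

/-- Closure 𝔠(𝒱) = ⋃_{n ≥ 1} (𝔣 ∘ 𝔤)ⁿ(𝒱). -/
def frakC {δ : Q → A → Set Q} {Fs : Set Q} (𝒱 : Set (CPair δ Fs)) : Set (CPair δ Fs) :=
  ⋃ n : ℕ, (fun 𝒲 => frakF δ Fs (frakG 𝒲))^[n + 1] 𝒱

/-- Abstraction α_* -/
def alphaStar (δ : Q → A → Set Q) (Fs : Set Q) (U : Set (List A)) : Set (QClass δ Fs) :=
  {C | (C.1 ∩ U).Nonempty}

/-- Concretization γ_* -/
def gammaStar {δ : Q → A → Set Q} {Fs : Set Q} (𝒰 : Set (QClass δ Fs)) : Set (List A) :=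
  ⋃ C ∈ 𝒰, C.1

/-- Abstraction α_{≤ω}. -/
def alphaOmega (δ : Q → A → Set Q) (Fs : Set Q) (V : Set (Word A)) : Set (CPair δ Fs) :=
  frakC (frakF δ Fs V)

/-- Concretization γ_{≤ω}. -/
def gammaOmega {δ : Q → A → Set Q} {Fs : Set Q} (𝒱 : Set (CPair δ Fs)) : Set (Word A) :=
  frakG 𝒱

/-!
Let `w ∈ UV^ω ∩ (A·C)D^ω` and write `w = g₀G` with `g₀ ∈ A·C`, `G ∈ D^ω`. Cutting the
`UV^ω`-factorisation of `w` at a block boundary beyond `g₀` and taking one more `V`-block gives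
`G = t v R` with `g₀t ∈ U`, `v ∈ V`, `R ∈ V^ω`. For `c ∈ C` the word `c t v R` lies both in
`CD^ω` and in `[ctv]V^ω`, and `([ctv], V) ∈ 𝓒` because `V` is idempotent; so closedness of `𝒱`
yields `([ctv], V) ∈ 𝒱`, while `U = [g₀tv] = A·C·[tv] = A·[ctv]`.
-/

section Classes

variable {δ : Q → A → Set Q} {Fs : Set Q}

theorem reach_append {p q : Q} (x y : List A) :
    Reach δ p (x ++ y) q ↔ ∃ r, Reach δ p x r ∧ Reach δ r y q := by
  induction x generalizing p with
  | nil => simp [Reach]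
  | cons a x ih =>
    simp only [List.cons_append, Reach, ih]
    tauto

theorem reachF_append {p q : Q} (x y : List A) :
    ReachF δ Fs p (x ++ y) q ↔
      (∃ r, ReachF δ Fs p x r ∧ Reach δ r y q) ∨ (∃ r, Reach δ p x r ∧ ReachF δ Fs r y q) := by
  constructor
  · rintro ⟨u, v, r, huv, hr, h1, h2⟩
    rcases List.append_eq_append_iff.1 huv with ⟨t, rfl, rfl⟩ | ⟨t, rfl, rfl⟩
    · obtain ⟨s, hs1, hs2⟩ := (reach_append x t).1 h1
      exact Or.inr ⟨s, hs1, t, v, r, rfl, hr, hs2, h2⟩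
    · obtain ⟨s, hs1, hs2⟩ := (reach_append t y).1 h2
      exact Or.inl ⟨s, ⟨u, t, r, rfl, hr, h1, hs1⟩, hs2⟩
  · rintro (⟨r, ⟨u, v, s, rfl, hs, h1, h2⟩, h3⟩ | ⟨r, h1, ⟨u, v, s, rfl, hs, h2, h3⟩⟩)
    · exact ⟨u, v ++ y, s, by simp, hs, h1, (reach_append v y).2 ⟨r, h2, h3⟩⟩
    · exact ⟨x ++ u, v, s, by simp, hs, (reach_append x u).2 ⟨r, h1, h2⟩, h3⟩

theorem Sim.refl (w : List A) : Sim δ Fs w w := fun _ _ => ⟨Iff.rfl, Iff.rfl⟩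

theorem Sim.symm {w u : List A} (h : Sim δ Fs w u) : Sim δ Fs u w :=
  fun p q => ⟨(h p q).1.symm, (h p q).2.symm⟩

theorem Sim.trans {w u v : List A} (h1 : Sim δ Fs w u) (h2 : Sim δ Fs u v) : Sim δ Fs w v :=
  fun p q => ⟨(h1 p q).1.trans (h2 p q).1, (h1 p q).2.trans (h2 p q).2⟩

theorem Sim.append {x x' y y' : List A} (hx : Sim δ Fs x x') (hy : Sim δ Fs y y') :
    Sim δ Fs (x ++ y) (x' ++ y') := by
  intro p q
  constructor
  · rw [reach_append, reach_append]
    exact exists_congr fun r => and_congr (hx p r).1 (hy r q).1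
  · rw [reachF_append, reachF_append]
    exact or_congr (exists_congr fun r => and_congr (hx p r).2 (hy r q).1)
      (exists_congr fun r => and_congr (hx p r).1 (hy r q).2)

theorem mem_wordClass_self (w : List A) : w ∈ wordClass δ Fs w := by
  by_cases h : w = [] <;> simp [wordClass, h, Sim.refl]

theorem wordClass_eq_of_mem {w u : List A} (h : u ∈ wordClass δ Fs w) :
    wordClass δ Fs u = wordClass δ Fs w := by
  ext v
  simp only [wordClass, Set.mem_ofPred_eq] at h ⊢
  rcases h with ⟨rfl, rfl⟩ | ⟨hw, hu, hs⟩
  · rfl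
  · constructor
    · rintro (⟨rfl, -⟩ | ⟨-, hv, hs'⟩)
      · exact absurd rfl hu
      · exact Or.inr ⟨hw, hv, hs.trans hs'⟩
    · rintro (⟨rfl, -⟩ | ⟨-, hv, hs'⟩)
      · exact absurd rfl hw
      · exact Or.inr ⟨hu, hv, hs.symm.trans hs'⟩

theorem append_mem_wordClass_append {w u w' u' : List A} (hw : w' ∈ wordClass δ Fs w)
    (hu : u' ∈ wordClass δ Fs u) : w' ++ u' ∈ wordClass δ Fs (w ++ u) := by
  simp only [wordClass, Set.mem_ofPred_eq] at *
  rcases hw with ⟨rfl, rfl⟩ | ⟨hw1, hw2, hws⟩ <;> rcases hu with ⟨rfl, rfl⟩ | ⟨hu1, hu2, hus⟩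
  · exact Or.inl ⟨rfl, rfl⟩
  · simpa using Or.inr ⟨hu1, hu2, hus⟩
  · simpa using Or.inr ⟨hw1, hw2, hws⟩
  · exact Or.inr ⟨by simp [hw1], by simp [hw2], hws.append hus⟩

theorem classMul_wordClass (w u : List A) :
    classMul δ Fs (wordClass δ Fs w) (wordClass δ Fs u) = wordClass δ Fs (w ++ u) := by
  ext v
  constructor
  · rintro ⟨w', hw', u', hu', hv⟩
    rwa [wordClass_eq_of_mem (append_mem_wordClass_append hw' hu')] at hv
  · exact fun hv => ⟨w, mem_wordClass_self w, u, mem_wordClass_self u, hv⟩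

theorem append_mem_classMul {C D : Set (List A)} {x y : List A} (hx : x ∈ C) (hy : y ∈ D) :
    x ++ y ∈ classMul δ Fs C D :=
  ⟨x, hx, y, hy, mem_wordClass_self _⟩

theorem IsClass.eq_wordClass_of_mem {C : Set (List A)} (hC : IsClass δ Fs C) {x : List A}
    (hx : x ∈ C) : C = wordClass δ Fs x := by
  obtain ⟨t, rfl⟩ := hC
  exact (wordClass_eq_of_mem hx).symm

theorem IsClass.classMul {C D : Set (List A)} (hC : IsClass δ Fs C) (hD : IsClass δ Fs D) :
    IsClass δ Fs (classMul δ Fs C D) := by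
  obtain ⟨c, rfl⟩ := hC
  obtain ⟨d, rfl⟩ := hD
  exact ⟨c ++ d, classMul_wordClass c d⟩

theorem classMul_assoc {C D E : Set (List A)} (hC : IsClass δ Fs C) (hD : IsClass δ Fs D)
    (hE : IsClass δ Fs E) :
    classMul δ Fs (classMul δ Fs C D) E = classMul δ Fs C (classMul δ Fs D E) := by
  obtain ⟨c, rfl⟩ := hC
  obtain ⟨d, rfl⟩ := hD
  obtain ⟨e, rfl⟩ := hE
  simp only [classMul_wordClass, List.append_assoc]

theorem classMul_wordClass_append_of_idem {V : Set (List A)} (hV : IsClass δ Fs V)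
    (hVV : classMul δ Fs V V = V) {v : List A} (hv : v ∈ V) (x : List A) :
    classMul δ Fs (wordClass δ Fs (x ++ v)) V = wordClass δ Fs (x ++ v) := by
  rw [hV.eq_wordClass_of_mem hv] at hVV ⊢
  rw [classMul_wordClass, List.append_assoc, ← classMul_wordClass x, ← classMul_wordClass v,
    hVV, classMul_wordClass]

end Classes

section Words

@[ext]
theorem Word.ext {x y : Word A} (h : ∀ n, x.1 n = y.1 n) : x = y := Subtype.ext (funext h)

theorem catWord_apply (u : List A) (w : Word A) (n : ℕ) :
    (catWord u w).1 n = if n < u.length then u[n]? else w.1 (n - u.length) := rfl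

theorem catWord_append (u v : List A) (w : Word A) :
    catWord (u ++ v) w = catWord u (catWord v w) := by
  ext n : 1
  simp only [catWord_apply, List.length_append, List.getElem?_append, Nat.sub_add_eq]
  split_ifs <;> first | rfl | omega

theorem catWord_injective (u : List A) : Function.Injective (catWord u) := by
  intro x y h
  ext n : 1
  simpa [catWord_apply] using congrArg (fun z : Word A => z.1 (u.length + n)) h

theorem catWord_eq_catWord_of_length_le {x y : List A} {X Y : Word A}
    (h : catWord x X = catWord y Y) (hl : x.length ≤ y.length) :
    ∃ t, y = x ++ t ∧ X = catWord t Y := by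
  have hxy : x <+: y := by
    refine List.prefix_iff_getElem?.2 fun n hn => ?_
    have hn' := congrArg (fun z : Word A => z.1 n) h
    simp only [catWord_apply, if_pos hn, if_pos (hn.trans_le hl)] at hn'
    rw [← hn', List.getElem?_eq_getElem hn]
  obtain ⟨t, rfl⟩ := hxy
  exact ⟨t, rfl, catWord_injective x (by rw [h, catWord_append])⟩

theorem flatMap_range_prefix (f : ℕ → List A) {j k : ℕ} (h : j ≤ k) :
    (List.range j).flatMap f <+: (List.range k).flatMap f := by
  obtain ⟨d, rfl⟩ := Nat.exists_eq_add_of_le h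
  rw [List.range_add, List.flatMap_append]
  exact List.prefix_append _ _

theorem flatMap_range_succ (f : ℕ → List A) (k : ℕ) :
    (List.range (k + 1)).flatMap f = f 0 ++ (List.range k).flatMap (fun i => f (i + 1)) := by
  rw [List.range_succ_eq_map, List.flatMap_cons, List.flatMap_map]

theorem getElem?_flatMap_range_eq (f : ℕ → List A) {j k n : ℕ}
    (hj : n < ((List.range j).flatMap f).length) (hk : n < ((List.range k).flatMap f).length) :
    ((List.range j).flatMap f)[n]? = ((List.range k).flatMap f)[n]? := by
  rcases le_total j k with hjk | hkj
  · obtain ⟨t, ht⟩ := flatMap_range_prefix f hjk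
    rw [← ht, List.getElem?_append_left hj]
  · obtain ⟨t, ht⟩ := flatMap_range_prefix f hkj
    rw [← ht, List.getElem?_append_left hk]

theorem prodWord_apply_eq_some_iff (f : ℕ → List A) (n : ℕ) (a : A) :
    (prodWord f).1 n = some a ↔ ∃ k, ((List.range k).flatMap f)[n]? = some a := by
  classical
  simp only [prodWord]
  split_ifs with h
  · refine ⟨fun ha => ⟨_, ha⟩, fun ⟨k, hk⟩ => ?_⟩
    rw [getElem?_flatMap_range_eq f h.choose_spec (List.getElem?_eq_some_iff.1 hk).1, hk]
  · simp only [false_iff, not_exists]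
    intro k hk
    exact h ⟨k, (List.getElem?_eq_some_iff.1 hk).1⟩

theorem prodWord_succ (f : ℕ → List A) :
    prodWord f = catWord (f 0) (prodWord fun i => f (i + 1)) := by
  ext n : 1
  refine Option.ext fun a => ?_
  have hshift : (∃ k, ((List.range k).flatMap f)[n]? = some a) ↔
      ∃ k, ((List.range (k + 1)).flatMap f)[n]? = some a := by
    refine ⟨fun ⟨k, hk⟩ => ?_, fun ⟨k, hk⟩ => ⟨k + 1, hk⟩⟩
    cases k with
    | zero => simp at hk
    | succ k => exact ⟨k, hk⟩
  rw [prodWord_apply_eq_some_iff, hshift, catWord_apply]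
  split_ifs with hn
  · simp [flatMap_range_succ, List.getElem?_append_left hn]
  · simp [prodWord_apply_eq_some_iff, flatMap_range_succ,
      List.getElem?_append_right (not_lt.1 hn)]

theorem prodWord_shift (f : ℕ → List A) (m : ℕ) :
    prodWord f = catWord ((List.range m).flatMap f) (prodWord fun i => f (m + i)) := by
  induction m with
  | zero =>
    ext n : 1
    simp [catWord_apply]
  | succ m ih =>
    rw [ih, prodWord_succ (fun i => f (m + i)), ← catWord_append, List.range_succ,
      List.flatMap_append]
    simp [Nat.add_assoc, Nat.add_comm 1]

theorem exists_length_le_flatMap_range {f : ℕ → List A} {y : List A} {W : Word A}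
    (h : prodWord f = catWord y W) : ∃ m, y.length ≤ ((List.range m).flatMap f).length := by
  rcases y.eq_nil_or_concat with rfl | ⟨L, b, rfl⟩
  · exact ⟨0, by simp⟩
  · have hb : (prodWord f).1 L.length = some b := by simp [h, catWord_apply]
    obtain ⟨k, hk⟩ := (prodWord_apply_eq_some_iff f _ b).1 hb
    exact ⟨k, by simpa using (List.getElem?_eq_some_iff.1 hk).1⟩

theorem mem_omegaProd_iff {C D : Set (List A)} {w : Word A} :
    w ∈ omegaProd C D ↔ ∃ c ∈ C, ∃ W ∈ omegaPow D, w = catWord c W := by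
  constructor
  · rintro ⟨f, h0, hD, rfl⟩
    exact ⟨f 0, h0, _, ⟨_, fun i => hD (i + 1) (by omega), rfl⟩, prodWord_succ f⟩
  · rintro ⟨c, hc, _, ⟨g, hg, rfl⟩, rfl⟩
    let f : ℕ → List A := fun | 0 => c | i + 1 => g i
    exact ⟨f, hc, fun | i + 1, _ => hg i, (prodWord_succ f).symm⟩

end Words

section OmegaProd

variable {δ : Q → A → Set Q} {Fs : Set Q}

theorem flatMap_range_succ_mem {U V : Set (List A)} (hUV : classMul δ Fs U V = U)
    {f : ℕ → List A} (h0 : f 0 ∈ U) (hV : ∀ i, 1 ≤ i → f i ∈ V) (m : ℕ) :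
    (List.range (m + 1)).flatMap f ∈ U := by
  induction m with
  | zero => simpa using h0
  | succ m ih =>
    rw [List.range_succ, List.flatMap_append, ← hUV]
    simpa using append_mem_classMul ih (hV (m + 1) (by omega))

theorem exists_split_of_catWord_mem_omegaProd {U V : Set (List A)}
    (hUV : classMul δ Fs U V = U) {y : List A} {W : Word A} (h : catWord y W ∈ omegaProd U V) :
    ∃ t, y ++ t ∈ U ∧ ∃ v ∈ V, ∃ R ∈ omegaPow V, W = catWord t (catWord v R) := by
  obtain ⟨f, h0, hV, hf⟩ := h
  obtain ⟨m, hm⟩ := exists_length_le_flatMap_range hf.symm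
  have hsplit : prodWord f = catWord ((List.range (m + 1)).flatMap f)
      (catWord (f (m + 1)) (prodWord fun i => f (m + 1 + (i + 1)))) := by
    rw [prodWord_shift f (m + 1), prodWord_succ fun i => f (m + 1 + i)]
  obtain ⟨t, ht, hW⟩ := catWord_eq_catWord_of_length_le (hf.trans hsplit)
    (hm.trans (flatMap_range_prefix f m.le_succ).length_le)
  exact ⟨t, ht ▸ flatMap_range_succ_mem hUV h0 hV m, f (m + 1), hV _ (by omega), _,
    ⟨_, fun i => hV _ (by omega), rfl⟩, hW⟩

end OmegaProd

theorem scale_closed_general {Q A : Type*}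
    (δ : Q → A → Set Q) (Fs : Set Q)
    (𝒰 : Set (QClass δ Fs)) (𝒱 : Set (CPair δ Fs)) (h : IsClosedC 𝒱) :
    IsClosedC {p : CPair δ Fs | ∃ Ac ∈ 𝒰, ∃ q ∈ 𝒱,
      p.1.1 = classMul δ Fs Ac.1 q.1.1 ∧ p.1.2 = q.1.2} := by
  rintro p ⟨Ac, hAc, r, hr, hp1, hp2⟩ q ⟨w, hwq, hwp⟩
  obtain ⟨hUcl, hVcl, hUV, hVV⟩ := q.2
  obtain ⟨c, hc⟩ := r.2.1
  have hcC : c ∈ r.1.1 := hc ▸ mem_wordClass_self c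
  change w ∈ omegaProd p.1.1 p.1.2 at hwp
  rw [hp1, hp2] at hwp
  obtain ⟨g0, hg0, G, hG, rfl⟩ := mem_omegaProd_iff.1 hwp
  obtain ⟨t, ht, v, hv, R, hR, rfl⟩ := exists_split_of_catWord_mem_omegaProd hUV hwq
  let r' : CPair δ Fs := ⟨(wordClass δ Fs (c ++ t ++ v), q.1.2), ⟨_, rfl⟩, hVcl,
    classMul_wordClass_append_of_idem hVcl hVV hv _, hVV⟩
  have hr' : r' ∈ 𝒱 := h r hr r' ⟨catWord c (catWord t (catWord v R)),
    mem_omegaProd_iff.2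
      ⟨_, mem_wordClass_self _, R, hR, by rw [catWord_append, catWord_append]⟩,
    mem_omegaProd_iff.2 ⟨c, hcC, _, hG, rfl⟩⟩
  refine ⟨Ac, hAc, r', hr', ?_, rfl⟩
  calc q.1.1 = wordClass δ Fs (g0 ++ (t ++ v)) := by
        refine hUcl.eq_wordClass_of_mem ?_
        rw [← List.append_assoc, ← hUV]
        exact append_mem_classMul ht hv
    _ = classMul δ Fs (classMul δ Fs Ac.1 (wordClass δ Fs c)) (wordClass δ Fs (t ++ v)) := by
        rw [← classMul_wordClass g0, ← (Ac.2.classMul r.2.1).eq_wordClass_of_mem hg0, hc]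
    _ = classMul δ Fs Ac.1 (wordClass δ Fs (c ++ t ++ v)) := by
        rw [classMul_assoc Ac.2 ⟨c, rfl⟩ ⟨_, rfl⟩, classMul_wordClass, List.append_assoc]

/-- if `𝒰 ∈ 𝒫(𝒬)` and `𝒱 ⊆ 𝓒` is closed then
`𝒰·𝒱 = {(A·C, D) | A ∈ 𝒰, (C,D) ∈ 𝒱}` is closed. -/
theorem scale_closed {Q A : Type*} [Finite Q] [Finite A]
    (δ : Q → A → Set Q) (Fs : Set Q)
    (𝒰 : Set (QClass δ Fs)) (𝒱 : Set (CPair δ Fs)) (h : IsClosedC 𝒱) :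
    IsClosedC {p : CPair δ Fs | ∃ Ac ∈ 𝒰, ∃ q ∈ 𝒱,
      p.1.1 = classMul δ Fs Ac.1 q.1.1 ∧ p.1.2 = q.1.2} :=
  scale_closed_general δ Fs 𝒰 𝒱 h
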